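/- Let K = (0,0), L = (1,0), m = (1/2, 0), and let T = {x ∈ ℝ² : ‖x − K‖ ≤ 1, ‖x − L‖ ≤ 1, x₂ ≥ 0, ‖x − m‖ ≥ 1/2}. Then K, L ∈ T, T has diameter exactly 1, T is disjoint from the open ball of center m and radius 1/2, and T has Lebesgue measure (5π − 6√3)/24 > 0. In particular T is a set of unit diameter containing the endpoints K, L of a diameter of the circle closedBall(m, 1/2) such that 100% of its area lies outside that circle (so such a set cannot be convex). -/

import Mathlib

/-!
Any two points `x, y` of the mixed triangle, labelled so that `y 1 ≤ x 1`, admit a base point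
`P ∈ {K, L}` such that `y - P` and `x - y` lie in a common closed quadrant; then
`‖x - P‖² = ‖y - P‖² + 2⟪y - P, x - y⟫ + ‖x - y‖² ≥ ‖x - y‖²`, so `‖x - y‖ ≤ ‖x - P‖ ≤ 1`.
Hence `T` has diameter `1`, attained at `K, L`. Over `[0, 1]`, the set `T` is the region between
the upper half of the circle on `KL` and the lower of the two unit arcs centred at `K` and `L`;
the symmetry `x ↦ 1 - x` and the primitive `(arcsin x + x √(1 - x²)) / 2` of `√(1 - x²)` give
its area `(π/3 - √3/4) - π/8`. The midpoint of `K` and `L` is the centre `m`, which `T` avoids,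
so `T` is not convex.
-/

open MeasureTheory Real

noncomputable def pt (a b : ℝ) : EuclideanSpace ℝ (Fin 2) :=
  (WithLp.equiv 2 (Fin 2 → ℝ)).symm ![a, b]

open Set

theorem dist_le_dist_of_inner_nonneg {E : Type*} [NormedAddCommGroup E] [InnerProductSpace ℝ E]
    {p x y : E} (h : 0 ≤ inner ℝ (y - p) (x - y)) : dist x y ≤ dist x p := by
  have hsq := norm_add_sq_real (y - p) (x - y)
  rw [sub_add_sub_cancel'] at hsq
  rw [dist_eq_norm, dist_eq_norm, ← sq_le_sq₀ (norm_nonneg _) (norm_nonneg _)]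
  nlinarith [sq_nonneg ‖y - p‖]

theorem volume_region_between_cc_eq_integral {α : Type*} [MeasurableSpace α] {μ : Measure α}
    [SigmaFinite μ] {f g : α → ℝ} {s : Set α} (hf : Measurable f) (hg : Measurable g)
    (f_int : IntegrableOn f s μ) (g_int : IntegrableOn g s μ) (hs : MeasurableSet s)
    (hfg : ∀ x ∈ s, f x ≤ g x) :
    μ.prod volume {p : α × ℝ | p.1 ∈ s ∧ p.2 ∈ Icc (f p.1) (g p.1)} =
      ENNReal.ofReal (∫ y in s, (g - f) y ∂μ) := by
  rw [← volume_regionBetween_eq_integral f_int g_int hs hfg,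
    Measure.prod_apply (measurableSet_region_between_cc hf hg hs),
    Measure.prod_apply (measurableSet_regionBetween hf hg hs)]
  congr 1
  ext x
  by_cases hx : x ∈ s <;>
    simp only [regionBetween, preimage_ofPred_eq, hx, true_and, false_and, ofPred_mem_eq,
      ofPred_false, Real.volume_Icc, Real.volume_Ioo]

lemma hasDerivAt_arcsin_add_mul_sqrt {x : ℝ} (h₁ : -1 < x) (h₂ : x < 1) :
    HasDerivAt (fun t => (arcsin t + t * √(1 - t ^ 2)) / 2) √(1 - x ^ 2) x := by
  have hpos : 0 < 1 - x ^ 2 := by nlinarith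
  have hsqrt : HasDerivAt (fun t => √(1 - t ^ 2)) (-(2 * x) / (2 * √(1 - x ^ 2))) x := by
    simpa using ((hasDerivAt_pow 2 x).const_sub 1).sqrt hpos.ne'
  refine (((hasDerivAt_arcsin h₁.ne' h₂.ne).add ((hasDerivAt_id' x).mul hsqrt)).div_const
    2).congr_deriv ?_
  have hs : √(1 - x ^ 2) ^ 2 = 1 - x ^ 2 := sq_sqrt hpos.le
  field_simp
  linear_combination -hs

lemma integral_sqrt_one_sub_sq_of_le {a b : ℝ} (ha : -1 ≤ a) (hab : a ≤ b) (hb : b ≤ 1) :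
    ∫ x in a..b, √(1 - x ^ 2) =
      (arcsin b + b * √(1 - b ^ 2)) / 2 - (arcsin a + a * √(1 - a ^ 2)) / 2 :=
  intervalIntegral.integral_eq_sub_of_hasDerivAt_of_le hab (by fun_prop)
    (fun x hx => hasDerivAt_arcsin_add_mul_sqrt (by linarith [hx.1]) (by linarith [hx.2]))
    ((by fun_prop : Continuous fun x : ℝ => √(1 - x ^ 2)).intervalIntegrable _ _)

lemma integral_sqrt_one_sub_sq_half_one :
    ∫ x in (1 / 2 : ℝ)..1, √(1 - x ^ 2) = π / 6 - √3 / 8 := by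
  have harcsin : arcsin (1 / 2) = π / 6 := by
    rw [← sin_pi_div_six, arcsin_sin (by linarith [pi_pos]) (by linarith [pi_pos])]
  have hsqrt : √(1 - (1 / 2) ^ 2) = √3 / 2 := by
    rw [show (1 : ℝ) - (1 / 2) ^ 2 = 3 / 2 ^ 2 by norm_num, sqrt_div' _ (by norm_num),
      sqrt_sq zero_le_two]
  rw [integral_sqrt_one_sub_sq_of_le (by norm_num) (by norm_num) le_rfl, harcsin, hsqrt]
  norm_num
  ring

@[simp] lemma pt_apply_zero (a b : ℝ) : pt a b 0 = a := by simp [pt]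

@[simp] lemma pt_apply_one (a b : ℝ) : pt a b 1 = b := by simp [pt]

lemma EuclideanSpace.inner_fin_two (x y : EuclideanSpace ℝ (Fin 2)) :
    inner ℝ x y = x 0 * y 0 + x 1 * y 1 := by
  simp only [PiLp.inner_apply, Fin.sum_univ_two, RCLike.inner_apply, conj_trivial]
  ring

lemma norm_sub_pt_sq (x : EuclideanSpace ℝ (Fin 2)) (a b : ℝ) :
    ‖x - pt a b‖ ^ 2 = (x 0 - a) ^ 2 + (x 1 - b) ^ 2 := by
  simp [EuclideanSpace.norm_sq_eq, Fin.sum_univ_two]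

lemma norm_sub_pt_le_iff {x : EuclideanSpace ℝ (Fin 2)} {a b r : ℝ} (hr : 0 ≤ r) :
    ‖x - pt a b‖ ≤ r ↔ (x 0 - a) ^ 2 + (x 1 - b) ^ 2 ≤ r ^ 2 := by
  rw [← norm_sub_pt_sq, sq_le_sq₀ (norm_nonneg _) hr]

lemma le_norm_sub_pt_iff {x : EuclideanSpace ℝ (Fin 2)} {a b r : ℝ} (hr : 0 ≤ r) :
    r ≤ ‖x - pt a b‖ ↔ r ^ 2 ≤ (x 0 - a) ^ 2 + (x 1 - b) ^ 2 := by
  rw [← norm_sub_pt_sq, sq_le_sq₀ hr (norm_nonneg _)]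

lemma dist_pt_pt (a b c d : ℝ) : dist (pt a b) (pt c d) = √((a - c) ^ 2 + (b - d) ^ 2) := by
  simp [EuclideanSpace.dist_eq, Fin.sum_univ_two, Real.dist_eq, sq_abs]

lemma midpoint_pt (a b c d : ℝ) :
    midpoint ℝ (pt a b) (pt c d) = pt ((a + c) / 2) ((b + d) / 2) := by
  ext i
  fin_cases i <;> simp [midpoint_eq_smul_add] <;> ring

def mixedTriangle : Set (EuclideanSpace ℝ (Fin 2)) :=
  {x | ‖x - pt 0 0‖ ≤ 1 ∧ ‖x - pt 1 0‖ ≤ 1 ∧ 0 ≤ x 1}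

lemma dist_le_one_of_mem_mixedTriangle {x y : EuclideanSpace ℝ (Fin 2)}
    (hx : x ∈ mixedTriangle) (hy : y ∈ mixedTriangle) : dist x y ≤ 1 := by
  wlog hxy : y 1 ≤ x 1 generalizing x y
  · rw [dist_comm]
    exact this hy hx (by linarith)
  obtain ⟨hyK, hyL, hy1⟩ := hy
  rw [norm_sub_pt_le_iff zero_le_one] at hyK hyL
  have via {p : EuclideanSpace ℝ (Fin 2)} (hxp : ‖x - p‖ ≤ 1)
      (h : 0 ≤ (y 0 - p 0) * (x 0 - y 0) + (y 1 - p 1) * (x 1 - y 1)) : dist x y ≤ 1 := by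
    refine (dist_le_dist_of_inner_nonneg ?_).trans (dist_eq_norm x p ▸ hxp)
    simpa only [EuclideanSpace.inner_fin_two, PiLp.sub_apply] using h
  rcases le_total (y 0) (x 0) with h | h
  · exact via hx.1 (by simp only [pt_apply_zero, pt_apply_one]; nlinarith)
  · exact via hx.2.1 (by simp only [pt_apply_zero, pt_apply_one]; nlinarith)

def crescent : Set (EuclideanSpace ℝ (Fin 2)) :=
  {x | ‖x - pt 0 0‖ ≤ 1 ∧ ‖x - pt 1 0‖ ≤ 1 ∧ 0 ≤ x 1 ∧ 1/2 ≤ ‖x - pt (1/2) 0‖}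

lemma crescent_subset_mixedTriangle : crescent ⊆ mixedTriangle :=
  fun _ hx => ⟨hx.1, hx.2.1, hx.2.2.1⟩

lemma pt_zero_zero_mem_crescent : pt 0 0 ∈ crescent := by
  simp only [crescent, mem_ofPred_eq, norm_sub_pt_le_iff zero_le_one,
    le_norm_sub_pt_iff one_half_pos.le, pt_apply_zero, pt_apply_one]
  norm_num

lemma pt_one_zero_mem_crescent : pt 1 0 ∈ crescent := by
  simp only [crescent, mem_ofPred_eq, norm_sub_pt_le_iff zero_le_one,
    le_norm_sub_pt_iff one_half_pos.le, pt_apply_zero, pt_apply_one]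
  norm_num

lemma diam_crescent : Metric.diam crescent = 1 := by
  have hdist : ∀ x ∈ crescent, ∀ y ∈ crescent, dist x y ≤ 1 := fun _ hx _ hy =>
    dist_le_one_of_mem_mixedTriangle (crescent_subset_mixedTriangle hx)
      (crescent_subset_mixedTriangle hy)
  refine le_antisymm (Metric.diam_le_of_forall_dist_le zero_le_one hdist) ?_
  calc 1 = dist (pt 0 0) (pt 1 0) := by norm_num [dist_pt_pt]
    _ ≤ Metric.diam crescent := Metric.dist_le_diam_of_mem (Metric.isBounded_iff.2 ⟨1, hdist⟩)
        pt_zero_zero_mem_crescent pt_one_zero_mem_crescent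

lemma disjoint_crescent_ball : Disjoint crescent (Metric.ball (pt (1 / 2) 0) (1 / 2)) :=
  disjoint_left.2 fun _ hx hball => (mem_ball_iff_norm.1 hball).not_ge hx.2.2.2

noncomputable def semicircle (x : ℝ) : ℝ := √(1 / 4 - (x - 1 / 2) ^ 2)

noncomputable def mixedTriangleTop (x : ℝ) : ℝ := min √(1 - x ^ 2) √(1 - (x - 1) ^ 2)

lemma continuous_semicircle : Continuous semicircle := by
  unfold semicircle
  fun_prop

lemma continuous_mixedTriangleTop : Continuous mixedTriangleTop := by
  unfold mixedTriangleTop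
  fun_prop

lemma semicircle_le_mixedTriangleTop {x : ℝ} (hx : x ∈ Icc (0 : ℝ) 1) :
    semicircle x ≤ mixedTriangleTop x :=
  le_min (Real.sqrt_le_sqrt (by nlinarith [hx.1, hx.2]))
    (Real.sqrt_le_sqrt (by nlinarith [hx.1, hx.2]))

lemma mem_crescent_iff (x : EuclideanSpace ℝ (Fin 2)) :
    x ∈ crescent ↔
      x 0 ∈ Icc 0 1 ∧ x 1 ∈ Icc (semicircle (x 0)) (mixedTriangleTop (x 0)) := by
  simp only [crescent, mem_ofPred_eq, norm_sub_pt_le_iff zero_le_one,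
    le_norm_sub_pt_iff one_half_pos.le, mem_Icc, semicircle, mixedTriangleTop, le_min_iff,
    Real.sqrt_le_iff]
  constructor
  · rintro ⟨hK, hL, hy, hm⟩
    exact ⟨⟨by nlinarith, by nlinarith⟩, ⟨hy, by linarith⟩,
      (Real.le_sqrt hy (by nlinarith)).2 (by linarith),
      (Real.le_sqrt hy (by nlinarith)).2 (by linarith)⟩
  · rintro ⟨⟨h0, h1⟩, ⟨hy, hm⟩, hK, hL⟩
    rw [Real.le_sqrt hy (by nlinarith)] at hK
    rw [Real.le_sqrt hy (by nlinarith)] at hL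
    exact ⟨by linarith, by linarith, hy, by linarith⟩

lemma volume_crescent_eq_integral :
    volume crescent =
      ENNReal.ofReal (∫ x in (0 : ℝ)..1, (mixedTriangleTop x - semicircle x)) := by
  have hmp : MeasurePreserving (fun x : EuclideanSpace ℝ (Fin 2) => (x 0, x 1)) :=
    (volume_preserving_finTwoArrow ℝ).comp (PiLp.volume_preserving_ofLp (Fin 2))
  have hpre : crescent = (fun x : EuclideanSpace ℝ (Fin 2) => (x 0, x 1)) ⁻¹'
      {p : ℝ × ℝ | p.1 ∈ Icc 0 1 ∧ p.2 ∈ Icc (semicircle p.1) (mixedTriangleTop p.1)} := by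
    ext x
    exact mem_crescent_iff x
  rw [hpre, hmp.measure_preimage (measurableSet_region_between_cc
      continuous_semicircle.measurable continuous_mixedTriangleTop.measurable
      measurableSet_Icc).nullMeasurableSet, Measure.volume_eq_prod,
    volume_region_between_cc_eq_integral continuous_semicircle.measurable
      continuous_mixedTriangleTop.measurable continuous_semicircle.integrableOn_Icc
      continuous_mixedTriangleTop.integrableOn_Icc measurableSet_Icc
      (fun _ hx => semicircle_le_mixedTriangleTop hx),
    intervalIntegral.integral_of_le zero_le_one, integral_Icc_eq_integral_Ioc]
  rfl

lemma integral_semicircle : ∫ x in (0 : ℝ)..1, semicircle x = π / 8 := by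
  have h (x : ℝ) : semicircle x = √(1 - (2 * x + -1) ^ 2) / 2 := by
    rw [semicircle, show 1 - (2 * x + -1) ^ 2 = 2 ^ 2 * (1 / 4 - (x - 1 / 2) ^ 2) by ring,
      sqrt_mul (by norm_num), sqrt_sq zero_le_two]
    ring
  simp only [h, intervalIntegral.integral_div,
    intervalIntegral.integral_comp_mul_add (fun u => √(1 - u ^ 2)) two_ne_zero (-1)]
  norm_num [integral_sqrt_one_sub_sq]
  ring

lemma mixedTriangleTop_one_sub (x : ℝ) : mixedTriangleTop (1 - x) = mixedTriangleTop x := by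
  rw [mixedTriangleTop, mixedTriangleTop, min_comm]
  ring_nf

lemma mixedTriangleTop_of_half_le {x : ℝ} (hx : 1 / 2 ≤ x) :
    mixedTriangleTop x = √(1 - x ^ 2) :=
  min_eq_left (Real.sqrt_le_sqrt (by nlinarith))

lemma integral_mixedTriangleTop :
    ∫ x in (0 : ℝ)..1, mixedTriangleTop x = π / 3 - √3 / 4 := by
  have hint (a b : ℝ) : IntervalIntegrable mixedTriangleTop volume a b :=
    continuous_mixedTriangleTop.intervalIntegrable a b
  have hleft : ∫ x in (0 : ℝ)..1 / 2, mixedTriangleTop x =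
      ∫ x in (1 / 2 : ℝ)..1, mixedTriangleTop x :=
    calc ∫ x in (0 : ℝ)..1 / 2, mixedTriangleTop x
        _ = ∫ x in (0 : ℝ)..1 / 2, mixedTriangleTop (1 - x) := by
          simp only [mixedTriangleTop_one_sub]
        _ = ∫ x in (1 / 2 : ℝ)..1, mixedTriangleTop x := by
          rw [intervalIntegral.integral_comp_sub_left]
          norm_num
  have hright : ∫ x in (1 / 2 : ℝ)..1, mixedTriangleTop x = π / 6 - √3 / 8 := by
    rw [← integral_sqrt_one_sub_sq_half_one]
    refine intervalIntegral.integral_congr fun x hx => mixedTriangleTop_of_half_le ?_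
    rw [uIcc_of_le (by norm_num)] at hx
    exact hx.1
  rw [← intervalIntegral.integral_add_adjacent_intervals (hint 0 (1 / 2)) (hint _ _), hleft,
    hright]
  ring

lemma volume_crescent : volume crescent = ENNReal.ofReal ((5 * π - 6 * √3) / 24) := by
  rw [volume_crescent_eq_integral,
    intervalIntegral.integral_sub (continuous_mixedTriangleTop.intervalIntegrable _ _)
      (continuous_semicircle.intervalIntegrable _ _),
    integral_mixedTriangleTop, integral_semicircle]
  ring_nf

theorem nonconvex_fully_outside
    (T : Set (EuclideanSpace ℝ (Fin 2)))
    (hT : T = {x : EuclideanSpace ℝ (Fin 2) |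
        ‖x - pt 0 0‖ ≤ 1 ∧ ‖x - pt 1 0‖ ≤ 1 ∧ 0 ≤ x 1 ∧
        1/2 ≤ ‖x - pt (1/2) 0‖}) :
    pt 0 0 ∈ T ∧ pt 1 0 ∈ T ∧
    Metric.diam T = 1 ∧
    Disjoint T (Metric.ball (pt (1/2) 0) (1/2)) ∧
    volume T = ENNReal.ofReal ((5 * π - 6 * Real.sqrt 3) / 24) ∧
    0 < volume T ∧
    ¬ Convex ℝ T := by
  obtain rfl : T = crescent := hT
  refine ⟨pt_zero_zero_mem_crescent, pt_one_zero_mem_crescent, diam_crescent,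
    disjoint_crescent_ball, volume_crescent, ?_, fun hconv => ?_⟩
  · have hsqrt3 : √3 < 2 := (sqrt_lt' two_pos).2 (by norm_num)
    rw [volume_crescent, ENNReal.ofReal_pos]
    linarith [pi_gt_three]
  · have hmid := hconv.midpoint_mem pt_zero_zero_mem_crescent pt_one_zero_mem_crescent
    rw [midpoint_pt] at hmid
    norm_num at hmid
    exact disjoint_crescent_ball.notMem_of_mem_left hmid (Metric.mem_ball_self one_half_pos)
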